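/- arXiv:2510.07040 — 11 statements merged into one kernel-verified Lean document; each statement's English description precedes it below -/
import Mathlib

section
/- Let f : A → B be a Z-kernel of a morphism g : B → C, and let b : B' → B be a morphism such that the pullback f' : A' → B' of f along b exists. Then f' is a Z-kernel of the composite b ≫ g. -/
open CategoryTheory

universe v u

variable {C : Type u} [Category.{v} C]

/-- A morphism is `Z`-trivial if it factors through an object of `Z`. -/
def IsZTrivial (Z : Set C) {A B : C} (f : A ⟶ B) : Prop :=
  ∃ (M : C) (g : A ⟶ M) (h : M ⟶ B), M ∈ Z ∧ g ≫ h = f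

/-- `k : K ⟶ A` is a `Z`-kernel of `f : A ⟶ B`. -/
def IsZKernel (Z : Set C) {K A B : C} (k : K ⟶ A) (f : A ⟶ B) : Prop :=
  IsZTrivial Z (k ≫ f) ∧
    ∀ (X : C) (x : X ⟶ A), IsZTrivial Z (x ≫ f) → ∃! x' : X ⟶ K, x' ≫ k = x

/-- `q : B ⟶ Q` is a `Z`-cokernel of `f : A ⟶ B`. -/
def IsZCokernel (Z : Set C) {A B Q : C} (f : A ⟶ B) (q : B ⟶ Q) : Prop :=
  IsZTrivial Z (f ≫ q) ∧
    ∀ (X : C) (x : B ⟶ X), IsZTrivial Z (f ≫ x) → ∃! x' : Q ⟶ X, q ≫ x' = x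

/-- A `Z`-normal monomorphism: a morphism occurring as a `Z`-kernel. -/
def IsZNormalMono (Z : Set C) {K A : C} (k : K ⟶ A) : Prop :=
  ∃ (B : C) (f : A ⟶ B), IsZKernel Z k f

/-- A `Z`-normal epimorphism: a morphism occurring as a `Z`-cokernel. -/
def IsZNormalEpi (Z : Set C) {B Q : C} (q : B ⟶ Q) : Prop :=
  ∃ (A : C) (f : A ⟶ B), IsZCokernel Z f q

/-- A `Z`-exact sequence: the first morphism is a `Z`-kernel of the second,
and the second is a `Z`-cokernel of the first. -/
def IsZExact (Z : Set C) {A X B : C} (a : A ⟶ X) (b : X ⟶ B) : Prop :=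
  IsZKernel Z a b ∧ IsZCokernel Z a b

/-- A class of objects is replete if it is closed under isomorphism. -/
def SetReplete (S : Set C) : Prop :=
  ∀ ⦃X Y : C⦄, X ∈ S → (X ≅ Y) → Y ∈ S

/-- `(T, F)` is a `Z`-torsion theory: every morphism from `T` to `F` is `Z`-trivial,
and every object has a `(T,F)`-presentation. -/
def IsZTorsionTheory (Z T F : Set C) : Prop :=
  (∀ ⦃A B : C⦄, A ∈ T → B ∈ F → ∀ f : A ⟶ B, IsZTrivial Z f) ∧
  (∀ X : C, ∃ (A B : C) (a : A ⟶ X) (b : X ⟶ B), A ∈ T ∧ B ∈ F ∧ IsZExact Z a b)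

/-- A morphism has `Z`-trivial `Z`-kernel if its `Z`-kernel exists and its domain lies in `Z`. -/
def HasZTrivialZKernel (Z : Set C) {X Y : C} (f : X ⟶ Y) : Prop :=
  ∃ (K : C) (k : K ⟶ X), IsZKernel Z k f ∧ K ∈ Z

/-- A class of objects is closed under `Z`-extensions. -/
def ClosedUnderZExtensions (Z S : Set C) : Prop :=
  ∀ ⦃A X B : C⦄ (a : A ⟶ X) (b : X ⟶ B), IsZExact Z a b → A ∈ S → B ∈ S → X ∈ S

/-- `C` is `Z`-semi-prenormal: `Z` is mono-coreflective, `C` admits pullbacks along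
`Z`-normal monomorphisms and `Z`-cokernels of `Z`-kernels, and the pullback of a
`Z`-normal epimorphism along a `Z`-normal monomorphism is a `Z`-normal epimorphism. -/
structure IsZSemiPrenormal (Z : Set C) : Prop where
  monoCoreflective : ∀ B : C, ∃ (ZB : C) (ε : ZB ⟶ B), ZB ∈ Z ∧ Mono ε ∧
    ∀ (W : C), W ∈ Z → ∀ g : W ⟶ B, ∃! g' : W ⟶ ZB, g' ≫ ε = g
  hasPullbacksAlongNormalMonos : ∀ {A M B : C} (g : A ⟶ B) (m : M ⟶ B),
    IsZNormalMono Z m → ∃ (P : C) (p : P ⟶ A) (q : P ⟶ M), IsPullback p q g m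
  hasCokernelsOfKernels : ∀ {K A : C} (k : K ⟶ A), IsZNormalMono Z k →
    ∃ (Q : C) (q : A ⟶ Q), IsZCokernel Z k q
  pullbackStability : ∀ {P M A B : C} (p : P ⟶ M) (q : P ⟶ A) (m : M ⟶ B) (f : A ⟶ B),
    IsPullback p q m f → IsZNormalEpi Z f → IsZNormalMono Z m → IsZNormalEpi Z p

/-- `C` is `Z`-prenormal: `Z`-semi-prenormal, finitely complete, and `Z`-normal
epimorphisms are stable under pullback along arbitrary morphisms. -/
structure IsZPrenormal (Z : Set C) extends IsZSemiPrenormal Z : Prop where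
  finitelyComplete : Limits.HasFiniteLimits C
  normalEpiStable : ∀ {P A B B' : C} (p : P ⟶ B') (q : P ⟶ A) (b : B' ⟶ B) (f : A ⟶ B),
    IsPullback p q b f → IsZNormalEpi Z f → IsZNormalEpi Z p

/-- the pullback of a `Z`-kernel `f` of `g` along `b` is a
`Z`-kernel of `b ≫ g`. -/
theorem zkernel_pullback (Z : Set C) (hZrep : SetReplete Z)
    {A B C' A' B' : C} (f : A ⟶ B) (g : B ⟶ C') (b : B' ⟶ B)
    (f' : A' ⟶ B') (a : A' ⟶ A)
    (hf : IsZKernel Z f g) (hpb : IsPullback f' a b f) :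
    IsZKernel Z f' (b ≫ g) := by
  obtain ⟨htriv, huniv⟩ := hf
  constructor
  · obtain ⟨M, u, v, hM, huv⟩ := htriv
    exact ⟨M, a ≫ u, v, hM, by
      rw [Category.assoc, huv, ← Category.assoc, ← hpb.w, Category.assoc]⟩
  · intro X x hx
    have hx' : IsZTrivial Z ((x ≫ b) ≫ g) := by
      rwa [Category.assoc]
    obtain ⟨y, hy, hyuniq⟩ := huniv X (x ≫ b) hx'
    refine ⟨hpb.lift x y hy.symm, hpb.lift_fst x y hy.symm, ?_⟩
    have hl2 := hpb.lift_snd x y hy.symm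
    intro m hm
    apply hpb.hom_ext
    · rw [hpb.lift_fst x y hy.symm, hm]
    · rw [hl2]
      apply hyuniq
      rw [Category.assoc, ← hpb.w, ← Category.assoc, hm]
end

section
/- Let B be an object of C and let ε_B : ZB → B be a monomorphism with ZB an object of Z. Then (ZB, ε_B) is a coreflection of B into Z (i.e., terminal among morphisms from objects of Z to B) if and only if ε_B is a Z-kernel of the identity of B. -/
open CategoryTheory

universe v u

variable {C : Type u} [Category.{v} C]

/-- a monomorphism `ε : ZB ⟶ B` with `ZB ∈ Z` is a coreflection of `B`
into `Z` iff it is a `Z`-kernel of the identity of `B`. -/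
theorem coreflection_iff_zkernel_id (Z : Set C) (hZrep : SetReplete Z)
    {ZB B : C} (ε : ZB ⟶ B) (hZB : ZB ∈ Z) (hmono : Mono ε) :
    (∀ (W : C), W ∈ Z → ∀ g : W ⟶ B, ∃! g' : W ⟶ ZB, g' ≫ ε = g) ↔
      IsZKernel Z ε (𝟙 B) := by
  constructor
  · intro hcor
    constructor
    · exact ⟨ZB, 𝟙 ZB, ε, hZB, by simp⟩
    · intro X x hx
      obtain ⟨M, g, h, hM, hgh⟩ := hx
      rw [Category.comp_id] at hgh
      obtain ⟨h', hh', _⟩ := hcor M hM h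
      refine ⟨g ≫ h', by simp only [Category.assoc, hh', hgh], ?_⟩
      intro y hy
      apply hmono.right_cancellation
      rw [hy, Category.assoc, hh', hgh]
  · intro hker W hW g
    exact hker.2 W g ⟨W, 𝟙 W, g, hW, by simp⟩
end

section
/- Let B be an object of C, let ε_B : ZB → B be a monomorphism with ZB ∈ Z that is a coreflection of B into Z, and let k : K → A and f : A → B be morphisms. Then k is a Z-kernel of f if and only if there exists a (necessarily unique) morphism h : K → ZB such that the square with sides k, f, h, ε_B (i.e., k ≫ f = h ≫ ε_B) is a pullback. -/
open CategoryTheory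

universe v u

variable {C : Type u} [Category.{v} C]

/-- given a mono coreflection `ε : ZB ⟶ B` of `B` into `Z`, a morphism
`k : K ⟶ A` is a `Z`-kernel of `f : A ⟶ B` iff there exists `h : K ⟶ ZB` making the
square `h ≫ ε = k ≫ f` a pullback. -/
theorem zkernel_iff_pullback_of_coreflection (Z : Set C) (hZrep : SetReplete Z)
    {ZB B K A : C} (ε : ZB ⟶ B) (hZB : ZB ∈ Z) (hmono : Mono ε)
    (hcor : ∀ (W : C), W ∈ Z → ∀ g : W ⟶ B, ∃! g' : W ⟶ ZB, g' ≫ ε = g)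
    (k : K ⟶ A) (f : A ⟶ B) :
    IsZKernel Z k f ↔ ∃ h : K ⟶ ZB, IsPullback h k ε f := by
  constructor
  · rintro ⟨⟨M, g, m, hM, hgm⟩, huniv⟩
    obtain ⟨m', hm', -⟩ := hcor M hM m
    have comm : (g ≫ m') ≫ ε = k ≫ f := by rw [Category.assoc, hm', hgm]
    refine ⟨g ≫ m', IsPullback.of_isLimit (Limits.PullbackCone.IsLimit.mk comm
      (fun s => ((huniv s.pt s.snd ⟨ZB, s.fst, ε, hZB, s.condition⟩).exists).choose)
      (fun s => ?_) (fun s => ?_) (fun s l hl1 hl2 => ?_))⟩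
    · have hspec := ((huniv s.pt s.snd ⟨ZB, s.fst, ε, hZB, s.condition⟩).exists).choose_spec
      rw [← cancel_mono ε, Category.assoc, comm, ← Category.assoc, hspec, s.condition]
    · exact ((huniv s.pt s.snd ⟨ZB, s.fst, ε, hZB, s.condition⟩).exists).choose_spec
    · obtain ⟨w, hw, hu⟩ := huniv s.pt s.snd ⟨ZB, s.fst, ε, hZB, s.condition⟩
      exact (hu l hl2).trans (hu _ ((huniv s.pt s.snd ⟨ZB, s.fst, ε, hZB, s.condition⟩).exists).choose_spec).symm
  · rintro ⟨h, hpb⟩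
    refine ⟨⟨ZB, h, ε, hZB, hpb.w⟩, ?_⟩
    rintro X x ⟨M, g, m, hM, hgm⟩
    obtain ⟨m', hm', -⟩ := hcor M hM m
    have comm : (g ≫ m') ≫ ε = x ≫ f := by rw [Category.assoc, hm', hgm]
    refine ⟨hpb.lift (g ≫ m') x comm, hpb.lift_snd _ _ _, fun y hy => ?_⟩
    apply hpb.hom_ext
    · rw [hpb.lift_fst, ← cancel_mono ε, Category.assoc, hpb.w, ← Category.assoc, hy, comm]
    · rw [hpb.lift_snd, hy]
end

section
/- Consider a pullback square in C with f : X → Y, f' : X' → Y', x : X → X', y : Y → Y' satisfying f ≫ y = x ≫ f', and let k : K → X be a Z-kernel of f. If y is a Z-normal monomorphism, then the composite k ≫ x : K → X' is a Z-kernel of f'. -/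
open CategoryTheory

universe v u

variable {C : Type u} [Category.{v} C]

/-- in a pullback square `f ≫ y = x ≫ f'` with `y` a `Z`-normal
monomorphism, if `k` is a `Z`-kernel of `f` then `k ≫ x` is a `Z`-kernel of `f'`. -/
theorem zkernel_of_pullback_along_normal_mono (Z : Set C) (hZrep : SetReplete Z)
    {K X Y X' Y' : C} (f : X ⟶ Y) (f' : X' ⟶ Y') (x : X ⟶ X') (y : Y ⟶ Y')
    (hpb : IsPullback f x y f') (k : K ⟶ X) (hk : IsZKernel Z k f)
    (hy : IsZNormalMono Z y) :
    IsZKernel Z (k ≫ x) f' := by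
  obtain ⟨B, g, hyk⟩ := hy
  -- y is mono
  have hymono : ∀ {T : C} (a b : T ⟶ Y), a ≫ y = b ≫ y → a = b := by
    intro T a b hab
    have htriv : IsZTrivial Z (a ≫ y ≫ g) := by
      obtain ⟨M, u, v, hM, huv⟩ := hyk.1
      exact ⟨M, a ≫ u, v, hM, by rw [Category.assoc, huv]⟩
    obtain ⟨w, -, huniq⟩ := hyk.2 T (a ≫ y) (by rw [Category.assoc]; exact htriv)
    exact (huniq a rfl).trans (huniq b hab.symm).symm
  constructor
  · obtain ⟨M, u, v, hM, huv⟩ := hk.1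
    refine ⟨M, u, v ≫ y, hM, ?_⟩
    rw [← Category.assoc, huv, Category.assoc, hpb.w, Category.assoc]
  · intro T t ht
    obtain ⟨M, u, v, hM, huv⟩ := ht
    -- v factors through y since v ≫ g is Z-trivial (M ∈ Z)
    obtain ⟨v', hv', -⟩ := hyk.2 M v ⟨M, 𝟙 M, v ≫ g, hM, Category.id_comp _⟩
    -- so t ≫ f' = (u ≫ v') ≫ y
    have hw : (u ≫ v') ≫ y = t ≫ f' := by
      rw [Category.assoc, hv', huv]
    -- lift to pullback
    set s : T ⟶ X := hpb.lift (u ≫ v') t hw with hs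
    have hsf : s ≫ f = u ≫ v' := hpb.lift_fst _ _ _
    have hsx : s ≫ x = t := hpb.lift_snd _ _ _
    have hstriv : IsZTrivial Z (s ≫ f) := ⟨M, u, v', hM, hsf.symm⟩
    obtain ⟨t', ht', htuniq⟩ := hk.2 T s hstriv
    refine ⟨t', show t' ≫ (k ≫ x) = t by rw [← Category.assoc, ht', hsx], ?_⟩
    intro t'' ht''
    apply htuniq
    -- show t'' ≫ k = s using pullback uniqueness
    have h1 : (t'' ≫ k) ≫ x = t := by rw [Category.assoc]; exact ht''
    have h2 : (t'' ≫ k) ≫ f = u ≫ v' := by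
      apply hymono
      rw [Category.assoc, hpb.w, ← Category.assoc, h1, ← hw]
    apply hpb.hom_ext
    · rw [h2, hsf]
    · rw [h1, hsx]
end

section
/- Let (T, F) be a Z-torsion theory on C. Then (T,F)-presentations are unique up to unique isomorphism: given two Z-exact sequences A → X → B and A' → X → B' of the same object X with A, A' ∈ T and B, B' ∈ F, there exist unique isomorphisms A → A' and B → B' making the evident diagram (with identity on X) commute. -/
open CategoryTheory

universe v u

variable {C : Type u} [Category.{v} C]

/-- `(T,F)`-presentations are unique up to unique isomorphism. -/
theorem presentation_unique (Z T F : Set C)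
    (hZrep : SetReplete Z) (hTrep : SetReplete T) (hFrep : SetReplete F)
    (htt : IsZTorsionTheory Z T F)
    {A A' X B B' : C} (a : A ⟶ X) (b : X ⟶ B) (a' : A' ⟶ X) (b' : X ⟶ B')
    (hA : A ∈ T) (hB : B ∈ F) (hA' : A' ∈ T) (hB' : B' ∈ F)
    (h1 : IsZExact Z a b) (h2 : IsZExact Z a' b') :
    (∃! φ : A ≅ A', φ.hom ≫ a' = a) ∧ (∃! ψ : B ≅ B', b ≫ ψ.hom = b') := by

  obtain ⟨hk1, hc1⟩ := h1
  obtain ⟨hk2, hc2⟩ := h2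
  constructor
  · -- isomorphism on the torsion part
    obtain ⟨u, hu, huuniq⟩ := hk2.2 A a (htt.1 hA hB' (a ≫ b'))
    obtain ⟨v, hv, hvuniq⟩ := hk1.2 A' a' (htt.1 hA' hB (a' ≫ b))
    obtain ⟨w, hw, hwuniq⟩ := hk1.2 A a hk1.1
    obtain ⟨w', hw', hwuniq'⟩ := hk2.2 A' a' hk2.1
    have huv : u ≫ v = 𝟙 A := by
      have h1 : (u ≫ v) ≫ a = a := by rw [Category.assoc, hv, hu]
      have h2 : (𝟙 A) ≫ a = a := by simp
      rw [hwuniq _ h1, hwuniq _ h2]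
    have hvu : v ≫ u = 𝟙 A' := by
      have h1 : (v ≫ u) ≫ a' = a' := by rw [Category.assoc, hu, hv]
      have h2 : (𝟙 A') ≫ a' = a' := by simp
      rw [hwuniq' _ h1, hwuniq' _ h2]
    refine ⟨⟨u, v, huv, hvu⟩, hu, ?_⟩
    intro φ hφ
    ext
    exact (huuniq _ hφ).trans (huuniq _ hu).symm
  · -- isomorphism on the torsion-free part
    obtain ⟨u, hu, huuniq⟩ := hc1.2 B' b' (htt.1 hA hB' (a ≫ b'))
    obtain ⟨v, hv, hvuniq⟩ := hc2.2 B b (htt.1 hA' hB (a' ≫ b))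
    obtain ⟨w, hw, hwuniq⟩ := hc1.2 B b hc1.1
    obtain ⟨w', hw', hwuniq'⟩ := hc2.2 B' b' hc2.1
    have huv : u ≫ v = 𝟙 B := by
      have h1 : b ≫ (u ≫ v) = b := by rw [← Category.assoc, hu, hv]
      have h2 : b ≫ (𝟙 B) = b := by simp
      rw [hwuniq _ h1, hwuniq _ h2]
    have hvu : v ≫ u = 𝟙 B' := by
      have h1 : b' ≫ (v ≫ u) = b' := by rw [← Category.assoc, hv, hu]
      have h2 : b' ≫ (𝟙 B') = b' := by simp
      rw [hwuniq' _ h1, hwuniq' _ h2]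
    refine ⟨⟨u, v, huv, hvu⟩, hu, ?_⟩
    intro ψ hψ
    ext
    exact (huuniq _ hψ).trans (huuniq _ hu).symm
end

section
/- Let (T, F) be a Z-torsion theory on C. Then the inclusion F ↪ C admits a left adjoint F̂ : C → F and the inclusion T ↪ C admits a right adjoint T̂ : C → T; moreover, denoting by η the unit of the first adjunction and by ε the counit of the second, for every object X of C the sequence T̂X →(ε_X) X →(η_X) F̂X is a (T,F)-presentation of X (in particular, ε_X is a Z-kernel of η_X and η_X is a Z-cokernel of ε_X). -/
open CategoryTheory

universe v u

variable {C : Type u} [Category.{v} C]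

/-- for a `Z`-torsion theory `(T,F)`, the inclusion of `F` admits a left
adjoint, the inclusion of `T` admits a right adjoint, and the unit/counit components
assemble into `(T,F)`-presentations. (Adjointness to the inclusion of a full
subcategory is expressed by pointwise (co)reflections.) -/
theorem torsion_theory_reflections (Z T F : Set C)
    (hZrep : SetReplete Z) (hTrep : SetReplete T) (hFrep : SetReplete F)
    (htt : IsZTorsionTheory Z T F) :
    ∀ X : C, ∃ (TX FX : C) (ε : TX ⟶ X) (η : X ⟶ FX),
      TX ∈ T ∧ FX ∈ F ∧
      (∀ (W : C), W ∈ T → ∀ g : W ⟶ X, ∃! g' : W ⟶ TX, g' ≫ ε = g) ∧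
      (∀ (Y : C), Y ∈ F → ∀ g : X ⟶ Y, ∃! g' : FX ⟶ Y, η ≫ g' = g) ∧
      IsZKernel Z ε η ∧ IsZCokernel Z ε η := by
  intro X
  obtain ⟨A, B, a, b, hA, hB, hker, hcoker⟩ := htt.2 X
  exact ⟨A, B, a, b, hA, hB,
    fun W hW g => hker.2 W g (htt.1 hW hB _),
    fun Y hY g => hcoker.2 Y g (htt.1 hA hY _),
    hker, hcoker⟩
end

section
/- Let (T, F) be a Z-torsion theory on C. If f : X → Y is a morphism whose Z-kernel exists and has domain in Z (f has Z-trivial Z-kernel), and Y ∈ F, then X ∈ F. -/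
open CategoryTheory

universe v u

variable {C : Type u} [Category.{v} C]

/-- if `f : X ⟶ Y` has `Z`-trivial `Z`-kernel and `Y` is torsion-free,
then `X` is torsion-free. -/
theorem torsion_free_closed_under_trivial_kernel_maps (Z T F : Set C)
    (hZrep : SetReplete Z) (hTrep : SetReplete T) (hFrep : SetReplete F)
    (htt : IsZTorsionTheory Z T F)
    {X Y : C} (f : X ⟶ Y) (hf : HasZTrivialZKernel Z f) (hY : Y ∈ F) :
    X ∈ F := by
  obtain ⟨K, k, hk, hKZ⟩ := hf
  obtain ⟨A, B, a, b, hA, hB, hab⟩ := htt.2 X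
  -- a ≫ f is Z-trivial since A ∈ T, Y ∈ F
  have haf : IsZTrivial Z (a ≫ f) := htt.1 hA hY (a ≫ f)
  -- so a factors through k, hence through K ∈ Z, hence a is Z-trivial
  obtain ⟨a', ha', _⟩ := hk.2 A a haf
  have haZ : IsZTrivial Z a := ⟨K, a', k, hKZ, ha'⟩
  -- b is a Z-cokernel of a; 𝟙 X satisfies a ≫ 𝟙 Z-trivial
  have h1 : IsZTrivial Z (a ≫ 𝟙 X) := by simpa using haZ
  obtain ⟨s, hs, _⟩ := hab.2.2 X (𝟙 X) h1
  -- show s ≫ b = 𝟙 B using uniqueness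
  have hbb : IsZTrivial Z (a ≫ b) := hab.2.1
  obtain ⟨t, ht, htuniq⟩ := hab.2.2 B b hbb
  have h2 : s ≫ b = t := htuniq _ (show b ≫ (s ≫ b) = b by rw [← Category.assoc, hs, Category.id_comp])
  have h3 : 𝟙 B = t := htuniq _ (show b ≫ 𝟙 B = b from Category.comp_id b)
  exact hFrep hB ⟨s, b, by rw [h2, ← h3], by simpa using hs⟩
end

section
/- Let F be a Z-normal-epi-reflective full replete subcategory of C with reflector F̂ and unit η, such that every component η_X admits a Z-kernel; denote by K the full subcategory of C consisting of the objects isomorphic to the domain of some Z-kernel of a component of η, and by H the full subcategory of objects X such that η_X is Z-trivial. Then F is a Z-torsion-free subcategory of C if and only if K = H, if and only if K ⊆ H; in that case (K, F) is a Z-torsion theory on C. -/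
open CategoryTheory

universe v u

variable {C : Type u} [Category.{v} C]

theorem zt_pre {Z : Set C} {A B X : C} (f : X ⟶ A) {g : A ⟶ B}
    (h : IsZTrivial Z g) : IsZTrivial Z (f ≫ g) := by
  obtain ⟨M, u, v, hM, huv⟩ := h
  exact ⟨M, f ≫ u, v, hM, by rw [Category.assoc, huv]⟩

theorem zt_post {Z : Set C} {A B X : C} {f : A ⟶ B} (g : B ⟶ X)
    (h : IsZTrivial Z f) : IsZTrivial Z (f ≫ g) := by
  obtain ⟨M, u, v, hM, huv⟩ := h
  exact ⟨M, u, v ≫ g, hM, by rw [← Category.assoc, huv]⟩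

/-- for a `Z`-normal-epi-reflective subcategory `F` with reflector `R`
and unit `η` whose components admit `Z`-kernels, `F` is `Z`-torsion-free iff `K = H`
iff `K ⊆ H`, where `K` consists of the domains of `Z`-kernels of components of `η`
and `H` of the objects with `Z`-trivial unit; and in that case `(K, F)` is a
`Z`-torsion theory. -/
theorem torsion_free_iff_K_eq_H (Z F : Set C)
    (hZrep : SetReplete Z) (hFrep : SetReplete F)
    (R : C → C) (η : ∀ X : C, X ⟶ R X)
    (hRF : ∀ X : C, R X ∈ F)
    (hrefl : ∀ (X Y : C), Y ∈ F → ∀ g : X ⟶ Y, ∃! g' : R X ⟶ Y, η X ≫ g' = g)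
    (hepi : ∀ X : C, IsZNormalEpi Z (η X))
    (hker : ∀ X : C, ∃ (K : C) (k : K ⟶ X), IsZKernel Z k (η X)) :
    ((∃ T : Set C, SetReplete T ∧ IsZTorsionTheory Z T F) ↔
        {Y : C | ∃ (X : C) (k : Y ⟶ X), IsZKernel Z k (η X)} =
          {X : C | IsZTrivial Z (η X)}) ∧
    ((∃ T : Set C, SetReplete T ∧ IsZTorsionTheory Z T F) ↔
        {Y : C | ∃ (X : C) (k : Y ⟶ X), IsZKernel Z k (η X)} ⊆
          {X : C | IsZTrivial Z (η X)}) ∧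
    ({Y : C | ∃ (X : C) (k : Y ⟶ X), IsZKernel Z k (η X)} ⊆
        {X : C | IsZTrivial Z (η X)} →
      IsZTorsionTheory Z {Y : C | ∃ (X : C) (k : Y ⟶ X), IsZKernel Z k (η X)} F) := by
  set K : Set C := {Y : C | ∃ (X : C) (k : Y ⟶ X), IsZKernel Z k (η X)} with hKdef
  set H : Set C := {X : C | IsZTrivial Z (η X)} with hHdef
  -- H ⊆ K always
  have hHK : H ⊆ K := by
    intro X hX
    refine ⟨X, 𝟙 X, ⟨by simpa using (show IsZTrivial Z (η X) from hX), fun W x hx => ⟨x, by simp, fun y hy => by simpa using hy⟩⟩⟩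
  -- η X is a Z-cokernel of its Z-kernel
  have hcok : ∀ (X K0 : C) (k : K0 ⟶ X), IsZKernel Z k (η X) → IsZCokernel Z k (η X) := by
    intro X K0 k hk
    obtain ⟨A', f, hf⟩ := hepi X
    obtain ⟨f', hf', -⟩ := hk.2 A' f hf.1
    refine ⟨hk.1, fun W x hx => ?_⟩
    have : IsZTrivial Z (f ≫ x) := by
      rw [← hf', Category.assoc]; exact zt_pre f' hx
    exact hf.2 W x this
  -- statement 3
  have main3 : K ⊆ H → IsZTorsionTheory Z K F := by
    intro hKH
    constructor
    · intro A B hA hB f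
      have hAH : IsZTrivial Z (η A) := hKH hA
      obtain ⟨g, hg, -⟩ := hrefl A B hB f
      rw [← hg]; exact zt_post g hAH
    · intro X
      obtain ⟨K0, k, hk⟩ := hker X
      exact ⟨K0, R X, k, η X, ⟨X, k, hk⟩, hRF X, hk, hcok X K0 k hk⟩
  -- K is replete
  have hKrep : SetReplete K := by
    intro Y Y' hY e
    obtain ⟨X, k, hk⟩ := hY
    refine ⟨X, e.inv ≫ k, ?_, ?_⟩
    · rw [Category.assoc]; exact zt_pre e.inv hk.1
    · intro W x hx
      obtain ⟨x', hx', hu⟩ := hk.2 W x hx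
      refine ⟨x' ≫ e.hom, by simp [hx'], ?_⟩
      intro y hy
      have h1 : y ≫ e.inv = x' := hu (y ≫ e.inv) (show (y ≫ e.inv) ≫ k = x by rw [Category.assoc]; exact hy)
      rw [← h1]; simp
  -- forward direction: torsion theory implies K ⊆ H
  have hforward : (∃ T : Set C, SetReplete T ∧ IsZTorsionTheory Z T F) → K ⊆ H := by
    rintro ⟨T, hTrep, hT⟩ Y hY
    obtain ⟨X, k, hk⟩ := hY
    obtain ⟨A, B, a, b, hA, hB, hex⟩ := hT.2 X
    have h1 : IsZTrivial Z (a ≫ η X) := hT.1 hA (hRF X) _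
    obtain ⟨α, hα, -⟩ := hk.2 A a h1
    obtain ⟨b', hb', -⟩ := hrefl X B hB b
    have h2 : IsZTrivial Z (k ≫ b) := by
      rw [← hb', ← Category.assoc]; exact zt_post b' hk.1
    obtain ⟨β, hβ, -⟩ := hex.1.2 Y k h2
    obtain ⟨w1, -, huK⟩ := hk.2 Y k hk.1
    have e1 : β ≫ α = 𝟙 Y := by
      have h3 := huK (β ≫ α) (show (β ≫ α) ≫ k = k by rw [Category.assoc, hα, hβ])
      have h4 := huK (𝟙 Y) (show 𝟙 Y ≫ k = k from Category.id_comp k)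
      rw [h3, h4]
    obtain ⟨w2, -, huA⟩ := hex.1.2 A a hex.1.1
    have e2 : α ≫ β = 𝟙 A := by
      have h3 := huA (α ≫ β) (show (α ≫ β) ≫ a = a by rw [Category.assoc, hβ, hα])
      have h4 := huA (𝟙 A) (show 𝟙 A ≫ a = a from Category.id_comp a)
      rw [h3, h4]
    have hYT : Y ∈ T := hTrep hA ⟨α, β, e2, e1⟩
    exact hT.1 hYT (hRF Y) (η Y)
  have hback : K ⊆ H → (∃ T : Set C, SetReplete T ∧ IsZTorsionTheory Z T F) :=
    fun h => ⟨K, hKrep, main3 h⟩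
  refine ⟨⟨fun h => Set.Subset.antisymm (hforward h) hHK, fun h => hback h.le⟩,
    ⟨hforward, hback⟩, main3⟩
end

section
/- Let F be a Z-normal-epi-reflective full replete subcategory of C with reflector F̂ and unit η, and assume that for every object X of C the morphism η_X : X → F̂X admits a Z-kernel k_X : KX → X. Then F is a Z-torsion-free subcategory of C if and only if for every object X the morphism k_{KX} : K(KX) → KX is an isomorphism. -/
open CategoryTheory

universe v u

variable {C : Type u} [Category.{v} C]

lemma IsZTrivial.precomp {Z : Set C} {A B : C} {f : A ⟶ B} (h : IsZTrivial Z f)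
    {W : C} (g : W ⟶ A) : IsZTrivial Z (g ≫ f) := by
  obtain ⟨M, u, v, hM, huv⟩ := h
  exact ⟨M, g ≫ u, v, hM, by rw [Category.assoc, huv]⟩

lemma IsZTrivial.postcomp {Z : Set C} {A B : C} {f : A ⟶ B} (h : IsZTrivial Z f)
    {W : C} (g : B ⟶ W) : IsZTrivial Z (f ≫ g) := by
  obtain ⟨M, u, v, hM, huv⟩ := h
  exact ⟨M, u, v ≫ g, hM, by rw [← Category.assoc, huv]⟩

/-- a `Z`-normal-epi-reflective subcategory `F`, whose unit components
`η X` have `Z`-kernels `kmap X : Kob X ⟶ X`, is `Z`-torsion-free iff `kmap (Kob X)`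
is an isomorphism for every `X`. -/
theorem torsion_free_iff_idempotent_radical (Z F : Set C)
    (hZrep : SetReplete Z) (hFrep : SetReplete F)
    (R : C → C) (η : ∀ X : C, X ⟶ R X)
    (hRF : ∀ X : C, R X ∈ F)
    (hrefl : ∀ (X Y : C), Y ∈ F → ∀ g : X ⟶ Y, ∃! g' : R X ⟶ Y, η X ≫ g' = g)
    (hepi : ∀ X : C, IsZNormalEpi Z (η X))
    (Kob : C → C) (kmap : ∀ X : C, Kob X ⟶ X)
    (hk : ∀ X : C, IsZKernel Z (kmap X) (η X)) :
    (∃ T : Set C, SetReplete T ∧ IsZTorsionTheory Z T F) ↔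
      ∀ X : C, IsIso (kmap (Kob X)) := by
  constructor
  · rintro ⟨T, hTrep, hTF, hpres⟩ X
    obtain ⟨A, B, a, b, hA, hB, hker, hcok⟩ := hpres X
    -- a factors through kmap X
    have haη : IsZTrivial Z (a ≫ η X) := hTF hA (hRF X) _
    obtain ⟨abar, habar, -⟩ := (hk X).2 A a haη
    -- kmap X factors through a
    obtain ⟨b', hb', -⟩ := hrefl X B hB b
    have hkb : IsZTrivial Z (kmap X ≫ b) := by
      rw [← hb', ← Category.assoc]
      exact ((hk X).1).postcomp b'
    obtain ⟨kbar, hkbar, -⟩ := hker.2 (Kob X) (kmap X) hkb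
    -- mutual inverses
    obtain ⟨u, -, hu⟩ := (hk X).2 (Kob X) (kmap X) (hk X).1
    have h1 : kbar ≫ abar = 𝟙 (Kob X) := by
      rw [hu (kbar ≫ abar) (by simp only [Category.assoc, habar, hkbar]),
        hu (𝟙 _) (by simp)]
    obtain ⟨w, -, hw⟩ := hker.2 A a hker.1
    have h2 : abar ≫ kbar = 𝟙 A := by
      rw [hw (abar ≫ kbar) (by simp only [Category.assoc, hkbar, habar]),
        hw (𝟙 _) (by simp)]
    have hKT : Kob X ∈ T := hTrep hA ⟨abar, kbar, h2, h1⟩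
    -- η (Kob X) is Z-trivial, so the identity factors through kmap (Kob X)
    have hηt : IsZTrivial Z (η (Kob X)) := hTF hKT (hRF _) _
    obtain ⟨s, hs, -⟩ := (hk (Kob X)).2 (Kob X) (𝟙 _)
      (by rw [Category.id_comp]; exact hηt)
    obtain ⟨u', -, hu'⟩ := (hk (Kob X)).2 _ (kmap (Kob X)) (hk (Kob X)).1
    have h3 : kmap (Kob X) ≫ s = 𝟙 _ := by
      rw [hu' (kmap (Kob X) ≫ s) (by simp only [Category.assoc, hs, Category.comp_id]),
        hu' (𝟙 _) (by simp)]
    exact ⟨s, h3, hs⟩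
  · intro hiso
    refine ⟨{A : C | ∀ B : C, B ∈ F → ∀ f : A ⟶ B, IsZTrivial Z f}, ?_, ?_, ?_⟩
    · intro X Y hX e B hB f
      have := (hX B hB (e.hom ≫ f)).precomp e.inv
      rwa [Iso.inv_hom_id_assoc] at this
    · intro A B hA hB f
      exact hA B hB f
    · intro X
      refine ⟨Kob X, R X, kmap X, η X, ?_, hRF X, (hk X), ?_⟩
      · -- Kob X is torsion
        intro B hB f
        have hηt : IsZTrivial Z (η (Kob X)) := by
          have h := ((hk (Kob X)).1).precomp (inv (kmap (Kob X)))
          rwa [IsIso.inv_hom_id_assoc] at h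
        obtain ⟨f', hf', -⟩ := hrefl (Kob X) B hB f
        rw [← hf']
        exact hηt.postcomp f'
      · -- η X is a Z-cokernel of kmap X
        obtain ⟨A', f, hcok⟩ := hepi X
        refine ⟨(hk X).1, ?_⟩
        intro W x hx
        obtain ⟨f', hf', -⟩ := (hk X).2 A' f hcok.1
        have hfx : IsZTrivial Z (f ≫ x) := by
          rw [← hf', Category.assoc]
          exact hx.precomp f'
        obtain ⟨x', hx', hx'u⟩ := hcok.2 W x hfx
        exact ⟨x', hx', fun y hy => hx'u y hy⟩
end

section
/- Assume C is Z-semi-prenormal. Let F be a Z-normal-epi-reflective full replete subcategory of C, with reflector F̂ and unit η. Then the following are equivalent: (i) F is a Z-torsion-free subcategory of C; (ii) the unit components of the reflection are stable under pullbacks along Z-normal monomorphisms, i.e., for every pullback square with p : P → X obtained by pulling back η_Y : Y → F̂Y along a Z-normal monomorphism f : X → F̂Y, the morphism p : P → X is a reflection of P into F. -/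
open CategoryTheory

universe v u

variable {C : Type u} [Category.{v} C]

section Helpers

variable {Z : Set C}

lemma isZTrivial_of_mem_dom {A B : C} (f : A ⟶ B) (h : A ∈ Z) : IsZTrivial Z f :=
  ⟨A, 𝟙 A, f, h, by simp⟩

lemma IsZTrivial.pre {A B : C} {f : A ⟶ B} (h : IsZTrivial Z f) {X : C} (w : X ⟶ A) :
    IsZTrivial Z (w ≫ f) := by
  obtain ⟨M, g, h', hM, hgh⟩ := h
  exact ⟨M, w ≫ g, h', hM, by rw [Category.assoc, hgh]⟩

lemma IsZTrivial.post {A B : C} {f : A ⟶ B} (h : IsZTrivial Z f) {X : C} (w : B ⟶ X) :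
    IsZTrivial Z (f ≫ w) := by
  obtain ⟨M, g, h', hM, hgh⟩ := h
  exact ⟨M, g, h' ≫ w, hM, by rw [← Category.assoc, hgh]⟩

lemma IsZKernel.mono {K A B : C} {k : K ⟶ A} {f : A ⟶ B} (h : IsZKernel Z k f) : Mono k := by
  constructor
  intro X u v huv
  have htriv : IsZTrivial Z ((u ≫ k) ≫ f) := by
    rw [Category.assoc]; exact h.1.pre u
  obtain ⟨w, -, hw⟩ := h.2 X (u ≫ k) htriv
  exact (hw u rfl).trans (hw v huv.symm).symm

lemma IsZNormalMono.mono {K A : C} {k : K ⟶ A} (h : IsZNormalMono Z k) : Mono k := by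
  obtain ⟨B, f, hf⟩ := h; exact hf.mono

/-- Z-trivial morphisms lift through Z-normal monos, with a Z-trivial lift. -/
lemma lift_of_trivial {X B A : C} {m : X ⟶ B} (hm : IsZNormalMono Z m) {x : A ⟶ B}
    (hx : IsZTrivial Z x) : ∃ x' : A ⟶ X, x' ≫ m = x ∧ IsZTrivial Z x' := by
  obtain ⟨W, g₀, hker⟩ := hm
  obtain ⟨M, u, v, hM, huv⟩ := hx
  have hv : IsZTrivial Z (v ≫ g₀) := isZTrivial_of_mem_dom _ hM
  obtain ⟨w, hw, -⟩ := hker.2 M v hv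
  refine ⟨u ≫ w, ?_, ⟨M, u, w, hM, rfl⟩⟩
  rw [Category.assoc, hw, huv]

end Helpers

/-- in a `Z`-semi-prenormal category, a `Z`-normal-epi-reflective
subcategory `F` is `Z`-torsion-free iff the unit components are stable under pullback
along `Z`-normal monomorphisms. -/
theorem torsion_free_iff_units_stable (Z F : Set C)
    (hZrep : SetReplete Z) (hFrep : SetReplete F)
    (hspn : IsZSemiPrenormal Z)
    (R : C → C) (η : ∀ X : C, X ⟶ R X)
    (hRF : ∀ X : C, R X ∈ F)
    (hrefl : ∀ (X Y : C), Y ∈ F → ∀ g : X ⟶ Y, ∃! g' : R X ⟶ Y, η X ≫ g' = g)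
    (hepi : ∀ X : C, IsZNormalEpi Z (η X)) :
    (∃ T : Set C, SetReplete T ∧ IsZTorsionTheory Z T F) ↔
      (∀ {P X Y : C} (f : X ⟶ R Y) (p : P ⟶ X) (f' : P ⟶ Y),
        IsZNormalMono Z f → IsPullback p f' f (η Y) →
          X ∈ F ∧ ∀ (W : C), W ∈ F → ∀ g : P ⟶ W, ∃! g' : X ⟶ W, p ≫ g' = g) := by
  constructor
  · -- torsion theory implies units stable under pullback
    rintro ⟨T, hTrep, hTF, hpres⟩
    intro P X Y f p f' hf hpb
    haveI : Mono f := hf.mono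
    -- X ∈ F
    have hXF : X ∈ F := by
      have htriv : ∀ (A : C), A ∈ T → ∀ t : A ⟶ X, IsZTrivial Z t := by
        intro A hA t
        have h1 : IsZTrivial Z (t ≫ f) := hTF hA (hRF Y) (t ≫ f)
        obtain ⟨t', ht', htriv'⟩ := lift_of_trivial hf h1
        have : t' = t := by rwa [← cancel_mono f]
        rwa [this] at htriv'
      obtain ⟨A, B, a, b, hA, hB, hex⟩ := hpres X
      have ha : IsZTrivial Z a := htriv A hA a
      obtain ⟨s, hs, -⟩ := hex.2.2 X (𝟙 X) (by simpa using ha)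
      have hsb : s ≫ b = 𝟙 B := by
        obtain ⟨w, -, huniq⟩ := hex.2.2 B b hex.2.1
        have h1 : b ≫ (s ≫ b) = b := by rw [← Category.assoc, hs, Category.id_comp]
        exact (huniq (s ≫ b) h1).trans (huniq (𝟙 B) (by simp)).symm
      exact hFrep hB ⟨s, b, hsb, hs⟩
    -- the kernel of η Y is torsion
    obtain ⟨A, B, a, b, hA, hB, hex⟩ := hpres Y
    obtain ⟨b', hb', -⟩ := hrefl Y B hB b
    have haη : IsZTrivial Z (a ≫ η Y) := hTF hA (hRF Y) _
    obtain ⟨e, he, -⟩ := hex.2.2 (R Y) (η Y) haη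
    have hker : IsZKernel Z a (η Y) := by
      constructor
      · rw [← he, ← Category.assoc]; exact hex.2.1.post e
      · intro X' x hx
        have hxb : IsZTrivial Z (x ≫ b) := by
          rw [← hb', ← Category.assoc]; exact hx.post b'
        exact hex.1.2 X' x hxb
    -- lift a to A ⟶ X through the normal mono f
    obtain ⟨W₀, g₀, hkf⟩ := hf
    obtain ⟨abar, habar, -⟩ := hkf.2 A (a ≫ η Y) (haη.post g₀)
    have hcomm : abar ≫ f = a ≫ η Y := habar
    set t := hpb.lift abar a hcomm with ht_def
    have ht1 : t ≫ p = abar := hpb.lift_fst abar a hcomm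
    have ht2 : t ≫ f' = a := hpb.lift_snd abar a hcomm
    -- p is a Z-normal epi by pullback stability
    obtain ⟨A₀, c, hc⟩ := hspn.pullbackStability p f' f (η Y) hpb (hepi Y) ⟨W₀, g₀, hkf⟩
    -- c factors through t
    have hcf' : IsZTrivial Z ((c ≫ f') ≫ η Y) := by
      rw [Category.assoc, ← hpb.w, ← Category.assoc]
      exact hc.1.post f
    obtain ⟨d, hd, -⟩ := hker.2 A₀ (c ≫ f') hcf'
    have hct : c = d ≫ t := by
      apply hpb.hom_ext
      · rw [← cancel_mono f]
        simp only [Category.assoc, hpb.w]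
        simp only [← Category.assoc]
        rw [Category.assoc d t f', ht2, hd]
      · rw [Category.assoc, ht2, hd]
    refine ⟨hXF, ?_⟩
    intro W hW g
    have hcg : IsZTrivial Z (c ≫ g) := by
      rw [hct, Category.assoc]
      exact (hTF hA hW (t ≫ g)).pre d
    exact hc.2 W g hcg
  · -- units stable implies torsion theory
    intro hstab
    refine ⟨{A : C | ∀ (W : C), W ∈ F → ∀ g : A ⟶ W, IsZTrivial Z g}, ?_, ?_, ?_⟩
    · intro A A' hA i W hW g
      have h1 := hA W hW (i.hom ≫ g)
      have hg : g = i.inv ≫ (i.hom ≫ g) := by simp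
      rw [hg]; exact h1.pre i.inv
    · intro A B hA hB f
      exact hA B hB f
    · intro X₀
      obtain ⟨Zc, ε, hZc, hmono, huniv⟩ := hspn.monoCoreflective (R X₀)
      haveI : Mono ε := hmono
      have hnm : IsZNormalMono Z ε := by
        refine ⟨R X₀, 𝟙 (R X₀), ?_, ?_⟩
        · exact ⟨Zc, 𝟙 Zc, ε ≫ 𝟙 (R X₀), hZc, by simp⟩
        · intro X' x hx
          obtain ⟨M, u, v, hM, huv⟩ := hx
          rw [Category.comp_id] at huv
          obtain ⟨v', hv', -⟩ := huniv M hM v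
          refine ⟨u ≫ v', ?_, ?_⟩
          · show (u ≫ v') ≫ ε = x
            rw [Category.assoc, hv', huv]
          · intro y hy
            rw [← cancel_mono ε, hy, Category.assoc, hv', huv]
      obtain ⟨P, p, q, hpb⟩ := hspn.hasPullbacksAlongNormalMonos (η X₀) ε hnm
      obtain ⟨-, hP⟩ := hstab ε q p hnm hpb.flip
      have hPT : ∀ (W : C), W ∈ F → ∀ g : P ⟶ W, IsZTrivial Z g := by
        intro W hW g
        obtain ⟨g', hg', -⟩ := hP W hW g
        exact ⟨Zc, q, g', hZc, hg'⟩
      have hker : IsZKernel Z p (η X₀) := by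
        refine ⟨⟨Zc, q, ε, hZc, hpb.w.symm⟩, ?_⟩
        intro X' x hx
        obtain ⟨M, u, v, hM, huv⟩ := hx
        obtain ⟨v', hv', -⟩ := huniv M hM v
        have hcomm : x ≫ η X₀ = (u ≫ v') ≫ ε := by rw [Category.assoc, hv', huv]
        refine ⟨hpb.lift x (u ≫ v') hcomm, hpb.lift_fst x (u ≫ v') hcomm, ?_⟩
        intro y hy
        apply hpb.hom_ext
        · rw [hy, hpb.lift_fst]
        · rw [← cancel_mono ε, Category.assoc, ← hpb.w, Category.assoc, ← hpb.w,
            ← Category.assoc, hy, ← Category.assoc, hpb.lift_fst]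
      obtain ⟨A₀, c, hc⟩ := hepi X₀
      have hcoker : IsZCokernel Z p (η X₀) := by
        refine ⟨⟨Zc, q, ε, hZc, hpb.w.symm⟩, ?_⟩
        intro X' x hx
        obtain ⟨d, hd, -⟩ := hker.2 A₀ c hc.1
        have hcx : IsZTrivial Z (c ≫ x) := by
          rw [← hd, Category.assoc]; exact hx.pre d
        exact hc.2 X' x hcx
      exact ⟨P, R X₀, p, η X₀, hPT, hRF X₀, hker, hcoker⟩
end

section
/- Assume C is Z-semi-prenormal. Let (T, F) be a Z-torsion theory on C and let F̂ : C → F be the left adjoint to the inclusion F ↪ C. Then (T, F) is Z-hereditary (i.e., for every morphism f : X → Y with Z-trivial Z-kernel and Y ∈ T, one has X ∈ T) if and only if F̂ preserves morphisms with Z-trivial Z-kernel (i.e., whenever f : X → Y has Z-trivial Z-kernel, so does F̂f). -/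
open CategoryTheory

universe v u

variable {C : Type u} [Category.{v} C]

section Helpers

lemma isZTrivial_of_dom {Z : Set C} {A B : C} (hA : A ∈ Z) (f : A ⟶ B) : IsZTrivial Z f :=
  ⟨A, 𝟙 A, f, hA, Category.id_comp f⟩

lemma isZTrivial_of_cod {Z : Set C} {A B : C} (hB : B ∈ Z) (f : A ⟶ B) : IsZTrivial Z f :=
  ⟨B, f, 𝟙 B, hB, Category.comp_id f⟩

lemma isZTrivial_comp_left {Z : Set C} {A B D : C} {g : B ⟶ D} (h : IsZTrivial Z g)
    (f : A ⟶ B) : IsZTrivial Z (f ≫ g) := by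
  obtain ⟨M, u, v, hM, huv⟩ := h
  exact ⟨M, f ≫ u, v, hM, by rw [Category.assoc, huv]⟩

lemma isZTrivial_comp_right {Z : Set C} {A B D : C} {f : A ⟶ B} (h : IsZTrivial Z f)
    (g : B ⟶ D) : IsZTrivial Z (f ≫ g) := by
  obtain ⟨M, u, v, hM, huv⟩ := h
  exact ⟨M, u, v ≫ g, hM, by rw [← huv, Category.assoc]⟩

lemma mono_of_isZKernel {Z : Set C} {K A B : C} {k : K ⟶ A} {f : A ⟶ B}
    (h : IsZKernel Z k f) : Mono k := by
  constructor
  intro W u v huv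
  have ht : IsZTrivial Z ((u ≫ k) ≫ f) := by
    rw [Category.assoc]; exact isZTrivial_comp_left h.1 u
  obtain ⟨x', -, hu⟩ := h.2 W (u ≫ k) ht
  rw [hu u rfl, hu v huv.symm]

lemma epi_of_isZCokernel {Z : Set C} {A B Q : C} {f : A ⟶ B} {q : B ⟶ Q}
    (h : IsZCokernel Z f q) : Epi q := by
  constructor
  intro W u v huv
  have ht : IsZTrivial Z (f ≫ q ≫ u) := by
    rw [← Category.assoc]; exact isZTrivial_comp_right h.1 u
  obtain ⟨x', -, hu⟩ := h.2 W (q ≫ u) ht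
  rw [hu u rfl, hu v huv.symm]

/-- Build an `IsPullback` from the bare universal property. -/
lemma isPullback_of_universal {P X Y B : C} (fst : P ⟶ X) (snd : P ⟶ Y) (f : X ⟶ B)
    (g : Y ⟶ B) (comm : fst ≫ f = snd ≫ g)
    (lift : ∀ (W : C) (a : W ⟶ X) (b : W ⟶ Y), a ≫ f = b ≫ g →
      ∃ l : W ⟶ P, l ≫ fst = a ∧ l ≫ snd = b)
    (ext : ∀ (W : C) (l l' : W ⟶ P), l ≫ fst = l' ≫ fst → l ≫ snd = l' ≫ snd → l = l') :
    IsPullback fst snd f g :=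
  IsPullback.of_isLimit (Limits.PullbackCone.IsLimit.mk comm
    (fun s => (lift s.pt s.fst s.snd s.condition).choose)
    (fun s => (lift s.pt s.fst s.snd s.condition).choose_spec.1)
    (fun s => (lift s.pt s.fst s.snd s.condition).choose_spec.2)
    (fun s m h1 h2 => ext s.pt m _
      (by rw [h1, (lift s.pt s.fst s.snd s.condition).choose_spec.1])
      (by rw [h2, (lift s.pt s.fst s.snd s.condition).choose_spec.2])))

/-- Every object has a torsion presentation whose cokernel part is the reflection unit. -/
lemma exists_presentation (Z T F : Set C) (htt : IsZTorsionTheory Z T F)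
    (R : C → C) (η : ∀ X : C, X ⟶ R X) (hRF : ∀ X : C, R X ∈ F)
    (hrefl : ∀ (X Y : C), Y ∈ F → ∀ g : X ⟶ Y, ∃! g' : R X ⟶ Y, η X ≫ g' = g)
    (X : C) :
    ∃ (TX : C) (t : TX ⟶ X), TX ∈ T ∧ IsZKernel Z t (η X) ∧ IsZCokernel Z t (η X) := by
  obtain ⟨A, B, a, b, hA, hB, hker, hcok⟩ := htt.2 X
  obtain ⟨γ, hγ, hγu⟩ := hcok.2 (R X) (η X) (htt.1 hA (hRF X) _)
  obtain ⟨β, hβ, hβu⟩ := hrefl X B hB b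
  have hβγ : β ≫ γ = 𝟙 (R X) := by
    have h1 : η X ≫ β ≫ γ = η X := by rw [← Category.assoc, hβ, hγ]
    have h2 : η X ≫ 𝟙 (R X) = η X := Category.comp_id _
    exact (hrefl X (R X) (hRF X) (η X)).unique h1 h2
  refine ⟨A, a, hA, ⟨htt.1 hA (hRF X) _, ?_⟩, ⟨htt.1 hA (hRF X) _, ?_⟩⟩
  · intro W x hx
    have hxb : IsZTrivial Z (x ≫ b) := by
      have : x ≫ b = (x ≫ η X) ≫ β := by rw [Category.assoc, hβ]
      rw [this]; exact isZTrivial_comp_right hx β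
    exact hker.2 W x hxb
  · intro W x hx
    obtain ⟨x', hx', hx'u⟩ := hcok.2 W x hx
    refine ⟨β ≫ x', ?_, ?_⟩
    · show η X ≫ β ≫ x' = x
      rw [← Category.assoc, hβ, hx']
    intro y hy
    have h1 : b ≫ γ ≫ y = x := by rw [← Category.assoc, hγ, hy]
    have h2 : γ ≫ y = x' := hx'u (γ ≫ y) h1
    rw [← h2, ← Category.assoc, hβγ, Category.id_comp]

lemma mem_torsion_of_eta_trivial (Z T F : Set C) (hTrep : SetReplete T)
    (htt : IsZTorsionTheory Z T F)
    (R : C → C) (η : ∀ X : C, X ⟶ R X) (hRF : ∀ X : C, R X ∈ F)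
    (hrefl : ∀ (X Y : C), Y ∈ F → ∀ g : X ⟶ Y, ∃! g' : R X ⟶ Y, η X ≫ g' = g)
    (X : C) (h : IsZTrivial Z (η X)) : X ∈ T := by
  obtain ⟨TX, t, hTX, hker, -⟩ := exists_presentation Z T F htt R η hRF hrefl X
  obtain ⟨s, hs, -⟩ := hker.2 X (𝟙 X) (by rwa [Category.id_comp])
  have hmono : Mono t := mono_of_isZKernel hker
  have hts : t ≫ s = 𝟙 TX := by
    rw [← cancel_mono t, Category.assoc, hs, Category.id_comp, Category.comp_id]
  exact hTrep hTX ⟨t, s, hts, hs⟩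

lemma mem_torsion_of_normal_epi (Z T F : Set C) (hTrep : SetReplete T)
    (hspn : IsZSemiPrenormal Z) (htt : IsZTorsionTheory Z T F)
    (R : C → C) (η : ∀ X : C, X ⟶ R X) (hRF : ∀ X : C, R X ∈ F)
    (hrefl : ∀ (X Y : C), Y ∈ F → ∀ g : X ⟶ Y, ∃! g' : R X ⟶ Y, η X ≫ g' = g)
    {A Q : C} {c : A ⟶ Q} (hc : IsZNormalEpi Z c) (hA : A ∈ T) : Q ∈ T := by
  obtain ⟨U, u, hcok⟩ := hc
  obtain ⟨M, α, β, hM, hαβ⟩ := htt.1 hA (hRF Q) (c ≫ η Q)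
  obtain ⟨Z', ε, hZ', hεmono, huniv⟩ := hspn.monoCoreflective (R Q)
  obtain ⟨β', hβ', -⟩ := huniv M hM β
  obtain ⟨x', hx', -⟩ := hcok.2 Z' (α ≫ β') (isZTrivial_of_cod hZ' _)
  have hepi : Epi c := epi_of_isZCokernel hcok
  have hkey : c ≫ x' ≫ ε = c ≫ η Q := by
    rw [← Category.assoc, hx', Category.assoc, hβ', hαβ]
  have := (cancel_epi c).mp hkey
  apply mem_torsion_of_eta_trivial Z T F hTrep htt R η hRF hrefl
  exact ⟨Z', x', ε, hZ', this⟩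

lemma mem_Z_of_zkernel (Z T F : Set C) (hZrep : SetReplete Z)
    (hspn : IsZSemiPrenormal Z) (htt : IsZTorsionTheory Z T F)
    {K A B : C} {k : K ⟶ A} {f : A ⟶ B}
    (hk : IsZKernel Z k f) (hK : K ∈ T) (hA : A ∈ F) : K ∈ Z := by
  obtain ⟨M, u, v, hM, huv⟩ := htt.1 hK hA k
  obtain ⟨w, hw, -⟩ := hk.2 M v (isZTrivial_of_dom hM _)
  have hmono : Mono k := mono_of_isZKernel hk
  have huw : (u ≫ w) ≫ k = 𝟙 K ≫ k := by
    rw [Category.assoc, hw, huv, Category.id_comp]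
  have huw' : u ≫ w = 𝟙 K := (cancel_mono k).mp huw
  obtain ⟨Z', ε, hZ', hεmono, huniv⟩ := hspn.monoCoreflective K
  obtain ⟨w', hw', -⟩ := huniv M hM w
  have h1 : (u ≫ w') ≫ ε = 𝟙 K := by rw [Category.assoc, hw', huw']
  have h2 : ε ≫ u ≫ w' = 𝟙 Z' := by
    rw [← cancel_mono ε, Category.assoc, h1, Category.id_comp, Category.comp_id]
  exact hZrep hZ' ⟨ε, u ≫ w', h2, h1⟩

end Helpers

/-- in a `Z`-semi-prenormal category, a `Z`-torsion theory `(T,F)` is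
`Z`-hereditary iff the reflector onto `F` preserves morphisms with `Z`-trivial
`Z`-kernel. (The reflector's action on a morphism `f : X ⟶ Y` is any morphism
`g : R X ⟶ R Y` with `η X ≫ g = f ≫ η Y`.) -/
theorem hereditary_iff_reflector_preserves (Z T F : Set C)
    (hZrep : SetReplete Z) (hTrep : SetReplete T) (hFrep : SetReplete F)
    (hspn : IsZSemiPrenormal Z)
    (htt : IsZTorsionTheory Z T F)
    (R : C → C) (η : ∀ X : C, X ⟶ R X)
    (hRF : ∀ X : C, R X ∈ F)
    (hrefl : ∀ (X Y : C), Y ∈ F → ∀ g : X ⟶ Y, ∃! g' : R X ⟶ Y, η X ≫ g' = g) :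
    (∀ ⦃X Y : C⦄ (f : X ⟶ Y), HasZTrivialZKernel Z f → Y ∈ T → X ∈ T) ↔
      (∀ ⦃X Y : C⦄ (f : X ⟶ Y), HasZTrivialZKernel Z f →
        ∀ g : R X ⟶ R Y, η X ≫ g = f ≫ η Y → HasZTrivialZKernel Z g) := by
  constructor
  · -- hereditary ⇒ reflector preserves
    intro hered X Y f hf g hg
    obtain ⟨Kf, kf, hkf, hKfZ⟩ := hf
    -- presentations
    obtain ⟨TX, tX, hTX, htXker, htXcoker⟩ := exists_presentation Z T F htt R η hRF hrefl X
    obtain ⟨TY, tY, hTY, htYker, htYcoker⟩ := exists_presentation Z T F htt R η hRF hrefl Y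
    obtain ⟨T', t', hT'T, ht'ker, -⟩ := exists_presentation Z T F htt R η hRF hrefl (R Y)
    have hT'Z : T' ∈ Z := mem_Z_of_zkernel Z T F hZrep hspn htt ht'ker hT'T (hRF Y)
    -- pullback P' of g along t'
    obtain ⟨P', p', q', hPB'⟩ :=
      hspn.hasPullbacksAlongNormalMonos g t' ⟨_, _, ht'ker⟩
    have ht'mono : Mono t' := mono_of_isZKernel ht'ker
    have hp'mono : Mono p' := by
      constructor
      intro W u v huv
      apply hPB'.hom_ext huv
      rw [← cancel_mono t', Category.assoc, Category.assoc, ← hPB'.w,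
        ← Category.assoc, huv, Category.assoc, hPB'.w]
    -- p' is a Z-kernel of g
    have p'ker : IsZKernel Z p' g := by
      constructor
      · rw [hPB'.w]; exact isZTrivial_comp_right (isZTrivial_of_cod hT'Z q') t'
      · intro W x hx
        obtain ⟨M, α, β, hM, hαβ⟩ := hx
        obtain ⟨β'', hβ'', -⟩ := ht'ker.2 M β (isZTrivial_of_dom hM _)
        have wcomm : x ≫ g = (α ≫ β'') ≫ t' := by
          rw [Category.assoc, hβ'', hαβ]
        refine ⟨hPB'.lift x (α ≫ β'') wcomm, hPB'.lift_fst _ _ _, ?_⟩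
        intro y hy
        rw [← cancel_mono p', hy, hPB'.lift_fst]
    -- pullback P of f along tY
    obtain ⟨P, p, q, hPB⟩ := hspn.hasPullbacksAlongNormalMonos f tY ⟨_, _, htYker⟩
    have htYmono : Mono tY := mono_of_isZKernel htYker
    have hkfftriv : IsZTrivial Z ((kf ≫ f) ≫ η Y) :=
      isZTrivial_comp_right (isZTrivial_comp_right (isZTrivial_of_dom hKfZ kf) f) (η Y)
    obtain ⟨w, hw, -⟩ := htYker.2 Kf (kf ≫ f) hkfftriv
    have hwj : kf ≫ f = w ≫ tY := hw.symm
    set j : Kf ⟶ P := hPB.lift kf w hwj with hj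
    have hjp : j ≫ p = kf := hPB.lift_fst _ _ _
    have hjq : j ≫ q = w := hPB.lift_snd _ _ _
    -- j is a Z-kernel of q
    have jker : IsZKernel Z j q := by
      constructor
      · rw [hjq]; exact isZTrivial_of_dom hKfZ w
      · intro W x hx
        have hxpf : IsZTrivial Z ((x ≫ p) ≫ f) := by
          rw [Category.assoc, hPB.w, ← Category.assoc]
          exact isZTrivial_comp_right hx tY
        obtain ⟨u, hu, huu⟩ := hkf.2 W (x ≫ p) hxpf
        have hup : (u ≫ j) ≫ p = x ≫ p := by rw [Category.assoc, hjp, hu]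
        have huq : (u ≫ j) ≫ q = x ≫ q := by
          rw [← cancel_mono tY]
          have e1 : ((u ≫ j) ≫ q) ≫ tY = u ≫ kf ≫ f := by
            simp only [Category.assoc]
            rw [← Category.assoc j q, hjq, hw]
          have e2 : (x ≫ q) ≫ tY = u ≫ kf ≫ f := by
            rw [Category.assoc, ← hPB.w, ← Category.assoc, ← hu, Category.assoc]
          rw [e1, e2]
        refine ⟨u, hPB.hom_ext hup huq, ?_⟩
        intro y hy
        apply huu
        rw [← hy, Category.assoc, hjp]
    have hPT : P ∈ T := hered q ⟨Kf, j, jker, hKfZ⟩ hTY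
    -- comparison map τ : TY ⟶ T'
    have htYηtriv : IsZTrivial Z ((tY ≫ η Y) ≫ η (R Y)) :=
      isZTrivial_comp_right (htt.1 hTY (hRF Y) _) _
    obtain ⟨τ, hτ, -⟩ := ht'ker.2 TY (tY ≫ η Y) htYηtriv
    -- the map m : P ⟶ P'
    have wm : (p ≫ η X) ≫ g = (q ≫ τ) ≫ t' := by
      rw [Category.assoc, hg, ← Category.assoc, hPB.w, Category.assoc, Category.assoc,
        hτ]
    set m : P ⟶ P' := hPB'.lift (p ≫ η X) (q ≫ τ) wm with hm
    have hmp' : m ≫ p' = p ≫ η X := hPB'.lift_fst _ _ _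
    have hmq' : m ≫ q' = q ≫ τ := hPB'.lift_snd _ _ _
    -- the left square is a pullback
    have hsq : IsPullback m p p' (η X) := by
      apply isPullback_of_universal m p p' (η X) (by rw [hmp'])
      · intro W a b hab
        have hbf : IsZTrivial Z ((b ≫ f) ≫ η Y) := by
          have : (b ≫ f) ≫ η Y = (a ≫ q') ≫ t' := by
            rw [Category.assoc, ← hg, ← Category.assoc, ← hab, Category.assoc, hPB'.w,
              ← Category.assoc]
          rw [this]
          exact isZTrivial_comp_right (isZTrivial_of_cod hT'Z _) t'
        obtain ⟨c, hc, -⟩ := htYker.2 W (b ≫ f) hbf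
        refine ⟨hPB.lift b c hc.symm, ?_, hPB.lift_fst _ _ _⟩
        apply hPB'.hom_ext
        · rw [Category.assoc, hmp', ← Category.assoc, hPB.lift_fst, hab]
        · rw [Category.assoc, hmq', ← Category.assoc, hPB.lift_snd,
            ← cancel_mono t', Category.assoc, hτ, ← Category.assoc, hc,
            Category.assoc, ← hg, ← Category.assoc, ← hab, Category.assoc, hPB'.w,
            ← Category.assoc]
      · intro W l l' h1 h2
        apply hPB.hom_ext h2
        rw [← cancel_mono tY, Category.assoc, Category.assoc, ← hPB.w,
          ← Category.assoc, h2, Category.assoc, hPB.w]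
    -- m is a Z-normal epi, hence P' is torsion, hence P' ∈ Z
    have hmepi : IsZNormalEpi Z m :=
      hspn.pullbackStability m p p' (η X) hsq ⟨TX, tX, htXcoker⟩ ⟨R Y, g, p'ker⟩
    have hP'T : P' ∈ T :=
      mem_torsion_of_normal_epi Z T F hTrep hspn htt R η hRF hrefl hmepi hPT
    have hP'Z : P' ∈ Z := mem_Z_of_zkernel Z T F hZrep hspn htt p'ker hP'T (hRF X)
    exact ⟨P', p', p'ker, hP'Z⟩
  · -- reflector preserves ⇒ hereditary
    intro hpres X Y f hf hYT
    obtain ⟨g, hg, -⟩ := hrefl X (R Y) (hRF Y) (f ≫ η Y)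
    obtain ⟨K, k, hk, hKZ⟩ := hpres f hf g hg
    have hηY : IsZTrivial Z (η Y) := htt.1 hYT (hRF Y) (η Y)
    have h1 : IsZTrivial Z (η X ≫ g) := by rw [hg]; exact isZTrivial_comp_left hηY f
    obtain ⟨u, hu, -⟩ := hk.2 X (η X) h1
    apply mem_torsion_of_eta_trivial Z T F hTrep htt R η hRF hrefl
    rw [← hu]
    exact isZTrivial_comp_right (isZTrivial_of_cod hKZ u) k
end
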